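/- For any d ≥ 1, β ≥ 0 and n ∈ ℕ, the random variable W_n := X_n + √λ_n·N(0,1) (with λ_n := ⟨Y_n²⟩_{Λ_n,β} and N(0,1) a standard normal independent of X_n) has a density given by f_{W_n}(x) = [exp(−x²/(2λ_n))/(√(2πλ_n)·⟨exp(Y_n²/(2λ_n))⟩_{Λ_n,β})]·⟨exp(xY_n/λ_n)⟩_{Λ_n,β} for all x ∈ ℝ. -/

import Mathlib

open MeasureTheory Filter Topology
open scoped ENNReal

noncomputable section

/-- The box `Λ_n = [-n,n]^d ∩ ℤ^d`. -/
def Lam (d n : ℕ) : Finset (Fin d → ℤ) :=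
  Finset.Icc (fun _ => -(n : ℤ)) (fun _ => (n : ℤ))

/-- Spin configurations on `Λ_n` (a `Bool` per site; `true ↦ +1`, `false ↦ -1`). -/
abbrev Config (d n : ℕ) := {x // x ∈ Lam d n} → Bool

/-- The ±1 spin value at a site. -/
def spin {d n : ℕ} (σ : Config d n) (u : {x // x ∈ Lam d n}) : ℝ :=
  if σ u then 1 else -1

/-- ℓ¹ distance on `ℤ^d`. -/
def dist1 {d : ℕ} (u v : Fin d → ℤ) : ℤ := ∑ i, |u i - v i|

/-- `Σ_{{u,v} ∈ E_n} σ_u σ_v`, the sum over (unordered) nearest-neighbour edges of `Λ_n`. -/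
def edgeSum (d n : ℕ) (σ : Config d n) : ℝ :=
  (1 / 2) * ∑ u : {x // x ∈ Lam d n}, ∑ v : {x // x ∈ Lam d n},
    (if dist1 (u : Fin d → ℤ) (v : Fin d → ℤ) = 1 then spin σ u * spin σ v else 0)

/-- The number `|E_n|` of nearest-neighbour edges of `Λ_n`. -/
def nEdges (d n : ℕ) : ℕ :=
  (Finset.univ.filter
    (fun p : {x // x ∈ Lam d n} × {x // x ∈ Lam d n} =>
      dist1 (p.1 : Fin d → ℤ) (p.2 : Fin d → ℤ) = 1)).card / 2

/-- Total magnetization `Y_n(σ) = Σ_{u ∈ Λ_n} σ_u`. -/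
def Ymag {d n : ℕ} (σ : Config d n) : ℝ := ∑ u, spin σ u

/-- Free boundary condition Ising expectation `⟨f⟩_{Λ_n,β}` (zero external field). -/
def ev (d n : ℕ) (β : ℝ) (f : Config d n → ℝ) : ℝ :=
  (∑ σ : Config d n, f σ * Real.exp (β * edgeSum d n σ)) /
    (∑ σ : Config d n, Real.exp (β * edgeSum d n σ))

/-- The spin at a point of `ℤ^d` (zero if the point is outside `Λ_n`). -/
def spinAt {d n : ℕ} (σ : Config d n) (x : Fin d → ℤ) : ℝ :=
  if h : x ∈ Lam d n then spin σ ⟨x, h⟩ else 0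

/-- The finite-volume two-point function `⟨σ_0 σ_x⟩_{Λ_n,β}`. -/
def twoPoint (d n : ℕ) (β : ℝ) (x : Fin d → ℤ) : ℝ :=
  ev d n β (fun σ => spinAt σ 0 * spinAt σ x)

/-- The critical inverse temperature
`β_c(d) = sup {β ≥ 0 : Σ_{x ∈ ℤ^d} lim_n ⟨σ_0 σ_x⟩_{Λ_n,β} < ∞}`. -/
def betac (d : ℕ) : ℝ :=
  sSup {β : ℝ | 0 ≤ β ∧ ∃ g : (Fin d → ℤ) → ℝ, Summable g ∧
    ∀ x, Tendsto (fun n => twoPoint d n β x) atTop (𝓝 (g x))}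

/-- The second moment `⟨Y_n²⟩_{Λ_n,β}`. -/
def varY (d n : ℕ) (β : ℝ) : ℝ := ev d n β (fun σ => (Ymag σ) ^ 2)

/-- The fourth cumulant `u₄(Y_n) = ⟨Y_n⁴⟩ - 3⟨Y_n²⟩²`. -/
def u4 (d n : ℕ) (β : ℝ) : ℝ :=
  ev d n β (fun σ => (Ymag σ) ^ 4) - 3 * (varY d n β) ^ 2

/-- Expectation `E_{Λ_n,β}[f(X_n)]` in the model perturbed by the critical
Curie–Weiss interaction, i.e. with Hamiltonian
`-β Σ σ_uσ_v - Y_n²/(2⟨Y_n²⟩_{Λ_n,β})`. -/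
def evX (d n : ℕ) (β : ℝ) (f : ℝ → ℝ) : ℝ :=
  (∑ σ : Config d n, f (Ymag σ) *
      Real.exp (β * edgeSum d n σ + (Ymag σ) ^ 2 / (2 * varY d n β))) /
    (∑ σ : Config d n,
      Real.exp (β * edgeSum d n σ + (Ymag σ) ^ 2 / (2 * varY d n β)))

/-- The Ising probability measure on configurations. -/
def isingMeasure (d n : ℕ) (β : ℝ) : Measure (Config d n) :=
  ∑ σ : Config d n,
    (ENNReal.ofReal (Real.exp (β * edgeSum d n σ) /
      ∑ τ : Config d n, Real.exp (β * edgeSum d n τ))) • Measure.dirac σ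

/-- The probability measure of the Curie–Weiss–perturbed Ising model. -/
def pertMeasure (d n : ℕ) (β : ℝ) : Measure (Config d n) :=
  ∑ σ : Config d n,
    (ENNReal.ofReal (Real.exp (β * edgeSum d n σ + (Ymag σ) ^ 2 / (2 * varY d n β)) /
      ∑ τ : Config d n,
        Real.exp (β * edgeSum d n τ + (Ymag τ) ^ 2 / (2 * varY d n β)))) • Measure.dirac σ

/-- The distribution of the total magnetization `Y_n`. -/
def lawY (d n : ℕ) (β : ℝ) : Measure ℝ := (isingMeasure d n β).map Ymag

/-- The distribution of `Y_n/√⟨Y_n²⟩_{Λ_n,β}`. -/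
def lawYnorm (d n : ℕ) (β : ℝ) : Measure ℝ :=
  (lawY d n β).map (fun x => x / Real.sqrt (varY d n β))

/-- The distribution of `X_n`, the total magnetization of the perturbed model. -/
def lawX (d n : ℕ) (β : ℝ) : Measure ℝ := (pertMeasure d n β).map Ymag

/-- The distribution of `X_n/√(E_{Λ_n,β}(X_n²))`. -/
def lawXnorm (d n : ℕ) (β : ℝ) : Measure ℝ :=
  (lawX d n β).map (fun x => x / Real.sqrt (evX d n β (fun y => y ^ 2)))

/-- The distribution of `W_n = X_n + √λ_n N(0,1)`, with `λ_n = ⟨Y_n²⟩_{Λ_n,β}` and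
`N(0,1)` a standard normal independent of `X_n`. -/
def lawW (d n : ℕ) (β : ℝ) : Measure ℝ :=
  ((lawX d n β).prod (ProbabilityTheory.gaussianReal 0 (Real.toNNReal (varY d n β)))).map
    (fun p => p.1 + p.2)

/-- `d_n = ⟨Y_n²⟩⁻¹ (-u₄(Y_n)/4!)^{1/4}`. -/
def dcoef (d n : ℕ) (β : ℝ) : ℝ :=
  (1 / varY d n β) * (-(u4 d n β) / 24) ^ ((1 : ℝ) / 4)

/-- `c_n = √⟨Y_n²⟩/(√(2π) ⟨exp(Y_n²/(2⟨Y_n²⟩))⟩) · (4!/(-u₄(Y_n)))^{1/4}`. -/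
def ccoef (d n : ℕ) (β : ℝ) : ℝ :=
  (Real.sqrt (varY d n β) /
      (Real.sqrt (2 * Real.pi) *
        ev d n β (fun σ => Real.exp ((Ymag σ) ^ 2 / (2 * varY d n β))))) *
    (24 / (-(u4 d n β))) ^ ((1 : ℝ) / 4)

/-- The distribution of `d_n W_n`. -/
def lawDW (d n : ℕ) (β : ℝ) : Measure ℝ := (lawW d n β).map (fun x => dcoef d n β * x)

/-- The distribution of `W̃_n = W_n/√(E_{Λ_n,β}(X_n²))`. -/
def lawWtilde (d n : ℕ) (β : ℝ) : Measure ℝ :=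
  (lawW d n β).map (fun x => x / Real.sqrt (evX d n β (fun y => y ^ 2)))

/-- The moment generating function `z ↦ ⟨exp(zY_n)⟩_{Λ_n,β}` of `Y_n`. -/
def mgfY (d n : ℕ) (β : ℝ) (z : ℂ) : ℂ :=
  (∑ σ : Config d n, Complex.exp (z * (Ymag σ : ℂ)) * (Real.exp (β * edgeSum d n σ) : ℂ)) /
    (∑ σ : Config d n, (Real.exp (β * edgeSum d n σ) : ℂ))

/-- `α : ℕ → ℝ` is the (nondecreasing, with multiplicity) listing of the Lee–Yang
zeros of `⟨exp(zY_n)⟩_{Λ_n,β}`: all its zeros are `{± i α_j : j ≥ 1}` with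
`0 < α_1 ≤ α_2 ≤ ⋯`, and the multiplicity of the zero at `±iα_j` is the number of
indices `k` with `α_k = α_j`. -/
def IsLYListing (d n : ℕ) (β : ℝ) (α : ℕ → ℝ) : Prop :=
  (∀ j, 0 < α j) ∧ Monotone α ∧
    (∀ j, mgfY d n β (Complex.I * (α j : ℂ)) = 0) ∧
    (∀ z : ℂ, mgfY d n β z = 0 →
      ∃ j, z = Complex.I * (α j : ℂ) ∨ z = -(Complex.I * (α j : ℂ))) ∧
    (∀ j, ∀ hA : AnalyticAt ℂ (mgfY d n β) (Complex.I * (α j : ℂ)),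
      analyticOrderAt (mgfY d n β) (Complex.I * (α j : ℂ)) = ({k | α k = α j}.ncard : ℕ∞))

/-- Convergence in distribution (weak convergence of laws on `ℝ`):
integrals of every bounded continuous function converge. -/
def TendstoInDistr (μ : ℕ → Measure ℝ) (ν : Measure ℝ) : Prop :=
  ∀ f : BoundedContinuousFunction ℝ ℝ,
    Tendsto (fun n => ∫ x, f x ∂(μ n)) atTop (𝓝 (∫ x, f x ∂ν))


/-- The partition function `Z_{Λ_n,β,h}` of the Ising model on `Λ_n` with free boundary
conditions and (complex) external field `h`. -/
def Zpart (d n : ℕ) (β : ℝ) (h : ℂ) : ℂ :=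
  ∑ σ : Config d n, Complex.exp ((β * edgeSum d n σ : ℝ) + h * (Ymag σ : ℝ))

/-- `N₋(σ)`, the number of minus spins of the configuration `σ`. -/
def Nminus {d n : ℕ} (σ : Config d n) : ℕ :=
  (Finset.univ.filter (fun u => σ u = false)).card

/-- The average magnetization density `m_{Λ_n}(z) = ⟨Σ_{u∈Λ_n}σ_u⟩_{Λ_n,β,h}/|Λ_n|`
viewed as a rational function of `z = e^{-2h}`. -/
def magDen (d n : ℕ) (β : ℝ) (z : ℂ) : ℂ :=
  (∑ σ : Config d n, (Ymag σ : ℂ) * (Real.exp (β * edgeSum d n σ) : ℂ) * z ^ Nminus σ) /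
    (((Lam d n).card : ℂ) *
      ∑ σ : Config d n, (Real.exp (β * edgeSum d n σ) : ℂ) * z ^ Nminus σ)

/-- `θ : ℕ → ℝ` (restricted to `j < |Λ_n|`) lists, with multiplicity and in nondecreasing
order, the arguments of the `|Λ_n|` roots (all on the unit circle, by the Lee–Yang circle
theorem) of the polynomial `P_n(z) = Σ_σ e^{βΣσσ} z^{N₋(σ)}` associated with the partition
function via `Z_{Λ_n,β,h} = e^{h|Λ_n|} P_n(e^{-2h})`. -/
def IsCircleRootListing (d n : ℕ) (β : ℝ) (θ : ℕ → ℝ) : Prop :=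
  (∀ j, j < (Lam d n).card → 0 < θ j ∧ θ j < 2 * Real.pi) ∧
  (∀ j k, j ≤ k → k < (Lam d n).card → θ j ≤ θ k) ∧
  ∀ z : ℂ, (∑ σ : Config d n, (Real.exp (β * edgeSum d n σ) : ℂ) * z ^ Nminus σ) =
    (Real.exp (β * edgeSum d n (fun _ => false)) : ℂ) *
      ∏ j ∈ Finset.range ((Lam d n).card), (z - Complex.exp (Complex.I * (θ j : ℝ)))

/-- The empirical distribution `μ_n` of the Lee–Yang zeros `exp(iθ_{j,n})`. -/
def empMeasure (d n : ℕ) (θ : ℕ → ℝ) : Measure ℂ :=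
  (((Lam d n).card : ℝ≥0∞))⁻¹ •
    ∑ j ∈ Finset.range ((Lam d n).card), Measure.dirac (Complex.exp (Complex.I * (θ j : ℝ)))

/-- A random variable (here: its law `μ` on `ℝ`) is of Lee–Yang type if it is symmetric,
has a finite Gaussian exponential moment, and its moment generating function has only
pure imaginary zeros. -/
def IsLYType (μ : Measure ℝ) : Prop :=
  μ.map (fun x => -x) = μ ∧
  (∃ D : ℝ, 0 < D ∧ ∫⁻ x, ENNReal.ofReal (Real.exp (D * x ^ 2)) ∂μ < ⊤) ∧
  ∀ z : ℂ, (∫ x : ℝ, Complex.exp (z * (x : ℝ)) ∂μ) = 0 → z.re = 0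

/-- The density `f_W(x) = K e^{-κ₁ x⁴} ∏_{j≥1} (1 + x²/a_j²) e^{-x²/a_j²}` from Theorem 1;
indices `j` with `a_j = ∞` contribute a factor `1` (here `(∞ : ℝ≥0∞).toReal = 0` and
`x²/0 = 0` by convention, so the formula below implements exactly this). -/
def fW (K κ : ℝ) (a : ℕ → ℝ≥0∞) (x : ℝ) : ℝ :=
  K * Real.exp (-(κ * x ^ 4)) *
    ∏' j, ((1 + x ^ 2 / ((a j).toReal) ^ 2) * Real.exp (-(x ^ 2 / ((a j).toReal) ^ 2)))


/-! Since `N(0,λ_n)` has a density, so does `W_n = X_n + √λ_n N(0,1)`, namely the `X_n`-average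
of the shifted Gaussian density `φ(x - X_n)`. The law of `X_n` is the Ising law of `Y_n` tilted
by `exp(Y_n²/(2λ_n))`, and completing the square,
`exp(y²/(2λ)) exp(-(x-y)²/(2λ)) = exp(-x²/(2λ)) exp(xy/λ)`, turns this average into an Ising
expectation of `exp(xY_n/λ_n)`. The variance `λ_n` is positive because `|Λ_n| = (2n+1)^d` is
odd, so `Y_n` never vanishes. -/

open ProbabilityTheory

namespace MeasureTheory.Measure

theorem conv_withDensity {G : Type*} [AddCommGroup G] [MeasurableSpace G]
    [MeasurableAdd₂ G] [MeasurableNeg G] (μ ν : Measure G) [SFinite μ] [SFinite ν]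
    [μ.IsAddLeftInvariant] {g : G → ℝ≥0∞} (hg : Measurable g) :
    ν ∗ μ.withDensity g = μ.withDensity (fun x => ∫⁻ y, g (x - y) ∂ν) := by
  refine ext_of_lintegral _ fun φ hφ => ?_
  rw [lintegral_conv hφ, lintegral_withDensity_eq_lintegral_mul _ (by fun_prop) hφ]
  calc ∫⁻ y, ∫⁻ z, φ (y + z) ∂μ.withDensity g ∂ν
      = ∫⁻ y, ∫⁻ x, φ x * g (x - y) ∂μ ∂ν := by
        refine lintegral_congr fun y => ?_
        rw [lintegral_withDensity_eq_lintegral_mul _ hg (by fun_prop),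
          ← lintegral_add_left_eq_self _ (-y)]
        simp [mul_comm, sub_eq_neg_add]
    _ = ∫⁻ x, ∫⁻ y, φ x * g (x - y) ∂ν ∂μ := lintegral_lintegral_swap (by fun_prop)
    _ = ∫⁻ x, ((fun x => ∫⁻ y, g (x - y) ∂ν) * φ) x ∂μ := by
        refine lintegral_congr fun x => ?_
        rw [lintegral_const_mul _ (by fun_prop), Pi.mul_apply, mul_comm]

end MeasureTheory.Measure

theorem ProbabilityTheory.conv_gaussianReal (ν : Measure ℝ) [SFinite ν] (m : ℝ) {v : NNReal}
    (hv : v ≠ 0) :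
    ν ∗ gaussianReal m v = volume.withDensity (fun x => ∫⁻ y, gaussianPDF m v (x - y) ∂ν) := by
  rw [gaussianReal_of_var_ne_zero m hv, Measure.conv_withDensity _ _ (measurable_gaussianPDF m v)]

theorem odd_card_Lam (d n : ℕ) : Odd (Lam d n).card := by
  rw [Lam, Pi.card_Icc, Finset.prod_const, Finset.card_univ, Fintype.card_fin, Int.card_Icc]
  exact Odd.pow ⟨n, by omega⟩

theorem Ymag_eq_card_sub_two_mul_Nminus {d n : ℕ} (σ : Config d n) :
    Ymag σ = (Lam d n).card - 2 * Nminus σ := by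
  have hspin : ∀ u, spin σ u = 1 - 2 * if σ u = false then 1 else 0 := by
    intro u; cases h : σ u <;> norm_num [spin, h]
  simp only [Ymag, hspin, Finset.sum_sub_distrib, ← Finset.mul_sum, Finset.sum_boole, Nminus]
  simp

theorem Ymag_ne_zero {d n : ℕ} (σ : Config d n) : Ymag σ ≠ 0 := by
  rw [Ymag_eq_card_sub_two_mul_Nminus, sub_ne_zero]
  norm_cast
  rintro h
  exact Nat.not_even_iff_odd.2 (odd_card_Lam d n) ⟨Nminus σ, by omega⟩

theorem varY_pos (d n : ℕ) (β : ℝ) : 0 < varY d n β := by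
  unfold varY ev
  have hY : ∀ σ : Config d n, 0 < Ymag σ ^ 2 := fun σ => sq_pos_of_ne_zero (Ymag_ne_zero σ)
  exact div_pos (Finset.sum_pos (fun σ _ => mul_pos (hY σ) (Real.exp_pos _)) Finset.univ_nonempty)
    (Finset.sum_pos (fun σ _ => Real.exp_pos _) Finset.univ_nonempty)

def pertProb (d n : ℕ) (β : ℝ) (σ : Config d n) : ℝ :=
  Real.exp (β * edgeSum d n σ + (Ymag σ) ^ 2 / (2 * varY d n β)) /
    ∑ τ : Config d n, Real.exp (β * edgeSum d n τ + (Ymag τ) ^ 2 / (2 * varY d n β))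

instance (d n : ℕ) (β : ℝ) : IsFiniteMeasure (pertMeasure d n β) := by
  constructor
  simp [pertMeasure]

instance (d n : ℕ) (β : ℝ) : IsFiniteMeasure (lawX d n β) := by
  unfold lawX; infer_instance

theorem lintegral_lawX (d n : ℕ) (β : ℝ) {f : ℝ → ℝ≥0∞} (hf : Measurable f) :
    ∫⁻ y, f y ∂lawX d n β = ∑ σ, ENNReal.ofReal (pertProb d n β σ) * f (Ymag σ) := by
  rw [lawX, lintegral_map hf (measurable_of_countable _), pertMeasure,
    lintegral_finsetSum_measure]
  simp only [lintegral_smul_measure, lintegral_dirac, smul_eq_mul, pertProb]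

theorem partitionFn_pos (d n : ℕ) (β : ℝ) : 0 < ∑ σ : Config d n, Real.exp (β * edgeSum d n σ) :=
  Finset.sum_pos (fun _ _ => Real.exp_pos _) Finset.univ_nonempty

theorem sum_mul_exp_eq_ev_mul (d n : ℕ) (β : ℝ) (f : Config d n → ℝ) :
    ∑ σ, f σ * Real.exp (β * edgeSum d n σ) =
      ev d n β f * ∑ σ : Config d n, Real.exp (β * edgeSum d n σ) :=
  (div_mul_cancel₀ _ (partitionFn_pos d n β).ne').symm

theorem exp_sq_div_mul_exp_neg_sub_sq_div {V : ℝ} (hV : V ≠ 0) (x y : ℝ) :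
    Real.exp (y ^ 2 / (2 * V)) * Real.exp (-(x - y) ^ 2 / (2 * V)) =
      Real.exp (-x ^ 2 / (2 * V)) * Real.exp (x * y / V) := by
  rw [← Real.exp_add, ← Real.exp_add]
  congr 1
  field_simp
  ring

theorem sum_pertProb_mul_gaussianPDFReal (d n : ℕ) (β x : ℝ) :
    ∑ σ, pertProb d n β σ * gaussianPDFReal 0 (varY d n β).toNNReal (x - Ymag σ) =
      Real.exp (-x ^ 2 / (2 * varY d n β)) /
          (Real.sqrt (2 * Real.pi * varY d n β) *
            ev d n β (fun σ => Real.exp ((Ymag σ) ^ 2 / (2 * varY d n β)))) *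
        ev d n β (fun σ => Real.exp (x * Ymag σ / varY d n β)) := by
  have hV := varY_pos d n β
  set V := varY d n β
  set Z := ∑ σ : Config d n, Real.exp (β * edgeSum d n σ)
  have hZ : 0 < Z := partitionFn_pos d n β
  have hpert : ∀ σ : Config d n, pertProb d n β σ = Real.exp (Ymag σ ^ 2 / (2 * V)) *
      Real.exp (β * edgeSum d n σ) / (ev d n β (fun σ => Real.exp (Ymag σ ^ 2 / (2 * V))) * Z) := by
    intro σ
    simp only [pertProb, Real.exp_add, mul_comm (Real.exp (β * _))]
    rw [sum_mul_exp_eq_ev_mul d n β (fun σ => Real.exp (Ymag σ ^ 2 / (2 * V)))]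
  have hgauss : ∀ t, gaussianPDFReal 0 V.toNNReal t =
      (Real.sqrt (2 * Real.pi * V))⁻¹ * Real.exp (-t ^ 2 / (2 * V)) := by
    intro t
    rw [gaussianPDFReal, Real.coe_toNNReal _ hV.le, sub_zero]
  calc ∑ σ, pertProb d n β σ * gaussianPDFReal 0 V.toNNReal (x - Ymag σ)
      = ∑ σ, Real.exp (-x ^ 2 / (2 * V)) / (Real.sqrt (2 * Real.pi * V) *
          (ev d n β (fun σ => Real.exp (Ymag σ ^ 2 / (2 * V))) * Z)) *
          (Real.exp (x * Ymag σ / V) * Real.exp (β * edgeSum d n σ)) := by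
        refine Finset.sum_congr rfl fun σ _ => ?_
        have hsq := exp_sq_div_mul_exp_neg_sub_sq_div hV.ne' x (Ymag σ)
        rw [hpert, hgauss]
        linear_combination Real.exp (β * edgeSum d n σ) / (Real.sqrt (2 * Real.pi * V) *
          (ev d n β (fun σ => Real.exp (Ymag σ ^ 2 / (2 * V))) * Z)) * hsq
    _ = Real.exp (-x ^ 2 / (2 * V)) / (Real.sqrt (2 * Real.pi * V) *
          (ev d n β (fun σ => Real.exp (Ymag σ ^ 2 / (2 * V))) * Z)) *
          (ev d n β (fun σ => Real.exp (x * Ymag σ / V)) * Z) := by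
        rw [← Finset.mul_sum, sum_mul_exp_eq_ev_mul]
    _ = _ := by
        field_simp

theorem statement3_general (d : ℕ) (β : ℝ) (n : ℕ) :
    lawW d n β = volume.withDensity (fun x => ENNReal.ofReal
      (Real.exp (-x ^ 2 / (2 * varY d n β)) /
          (Real.sqrt (2 * Real.pi * varY d n β) *
            ev d n β (fun σ => Real.exp ((Ymag σ) ^ 2 / (2 * varY d n β)))) *
        ev d n β (fun σ => Real.exp (x * Ymag σ / varY d n β)))) := by
  have hv : (varY d n β).toNNReal ≠ 0 := by simpa using varY_pos d n β
  have hpert : ∀ σ, 0 ≤ pertProb d n β σ := fun σ => by unfold pertProb; positivity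
  rw [show lawW d n β = lawX d n β ∗ gaussianReal 0 _ from rfl, conv_gaussianReal _ _ hv]
  congr 1 with x
  rw [lintegral_lawX _ _ _ (by fun_prop), ← sum_pertProb_mul_gaussianPDFReal,
    ENNReal.ofReal_sum_of_nonneg fun σ _ => mul_nonneg (hpert σ) (gaussianPDFReal_nonneg _ _ _)]
  simp only [gaussianPDF, ENNReal.ofReal_mul (hpert _)]

/-- **Density of `W_n = X_n + √λ_n N(0,1)`** (with `λ_n = ⟨Y_n²⟩_{Λ_n,β}`):
`f_{W_n}(x) = exp(-x²/(2λ_n))/(√(2πλ_n)⟨exp(Y_n²/(2λ_n))⟩_{Λ_n,β}) · ⟨exp(xY_n/λ_n)⟩_{Λ_n,β}`. -/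
theorem statement3 (d : ℕ) (hd : 1 ≤ d) (β : ℝ) (hβ : 0 ≤ β) (n : ℕ) :
    lawW d n β = volume.withDensity (fun x => ENNReal.ofReal
      (Real.exp (-x ^ 2 / (2 * varY d n β)) /
          (Real.sqrt (2 * Real.pi * varY d n β) *
            ev d n β (fun σ => Real.exp ((Ymag σ) ^ 2 / (2 * varY d n β)))) *
        ev d n β (fun σ => Real.exp (x * Ymag σ / varY d n β)))) :=
  statement3_general d β n

end
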